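/- There exist absolute constants c₁ > 0 and c₂ > 0 such that for every 0 < ε < 1/2 the following holds. Let H_ε = {(z, y) ∈ ℂ² : z·y = ε²} and G_ε = H_ε ∩ Q, where Q is the closed unit polydisk in ℂ². Then there exists a doubling covering 𝒰 of G_ε in H_ε, with charts given by analytic injective maps from disks in ℂ, such that κ(𝒰) ≤ c₁·log(c₂/ε), and such that any two points in the same connected component of G_ε can be joined by a chain of charts of 𝒰 in which every pair of consecutive charts has intersection radius at least 1/10. -/

import Mathlib

open Metric Set

noncomputable section

/-- A doubling covering of `G` in `Y ⊆ ℂ^N`, with charts given by analytic injective maps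
`ψ̃_j` defined on an open neighborhood of the closed ball `B̄₄ ⊆ ℂᵏ`, with images in `Y`,
such that the charts `U_j = ψ̃_j(B₁)` cover `G`. -/
structure DoublingCovering (k N : ℕ) (G Y : Set (EuclideanSpace ℂ (Fin N))) where
  /-- the number of charts `κ(𝒰)` -/
  kappa : ℕ
  /-- the chart maps -/
  psi : Fin kappa → EuclideanSpace ℂ (Fin k) → EuclideanSpace ℂ (Fin N)
  /-- the open neighborhoods of `B̄₄` on which the chart maps are analytic and injective -/
  dom : Fin kappa → Set (EuclideanSpace ℂ (Fin k))
  dom_open : ∀ j, IsOpen (dom j)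
  dom_superset : ∀ j, closedBall (0 : EuclideanSpace ℂ (Fin k)) 4 ⊆ dom j
  analytic : ∀ j, AnalyticOnNhd ℂ (psi j) (dom j)
  injOn : ∀ j, Set.InjOn (psi j) (dom j)
  mapsTo : ∀ j, Set.MapsTo (psi j) (dom j) Y
  covers : G ⊆ ⋃ j, psi j '' ball (0 : EuclideanSpace ℂ (Fin k)) 1

namespace DoublingCovering

variable {k N : ℕ} {G Y : Set (EuclideanSpace ℂ (Fin N))}

/-- The chart `U_j = ψ̃_j(B₁)`. -/
def chart (U : DoublingCovering k N G Y) (j : Fin U.kappa) :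
    Set (EuclideanSpace ℂ (Fin N)) :=
  U.psi j '' ball 0 1

/-- `ψ̃_j⁻¹(U_j ∩ S)` (the preimage taken inside `B₁`) contains a ball of radius `ρ`. -/
def RadGe (U : DoublingCovering k N G Y) (j : Fin U.kappa)
    (S : Set (EuclideanSpace ℂ (Fin N))) (ρ : ℝ) : Prop :=
  ∃ c : EuclideanSpace ℂ (Fin k),
    ball c ρ ⊆ {x ∈ ball (0 : EuclideanSpace ℂ (Fin k)) 1 | U.psi j x ∈ U.chart j ∩ S}

/-- The intersection radius `ρ(U_i, U_j)` of two charts is at least `ρ`. -/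
def InterGe (U : DoublingCovering k N G Y) (i j : Fin U.kappa) (ρ : ℝ) : Prop :=
  U.RadGe i (U.chart j) ρ ∧ U.RadGe j (U.chart i) ρ

/-- A chain of at most `L` pairwise distinct charts whose first chart satisfies
`ρ(U_{j₁}, Ω) ≥ ρ`, whose consecutive intersection radii are at least `ρ` (in particular
consecutive charts intersect), and whose last chart contains `z`. -/
def ChainFrom (U : DoublingCovering k N G Y) (Ω : Set (EuclideanSpace ℂ (Fin N)))
    (ρ : ℝ) (L : ℕ) (z : EuclideanSpace ℂ (Fin N)) : Prop :=
  ∃ (l : ℕ) (hl : 0 < l) (js : Fin l → Fin U.kappa), l ≤ L ∧ Function.Injective js ∧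
    U.RadGe (js ⟨0, hl⟩) Ω ρ ∧
    (∀ m : ℕ, (h : m + 1 < l) → U.InterGe (js ⟨m, by omega⟩) (js ⟨m + 1, h⟩) ρ) ∧
    z ∈ U.chart (js ⟨l - 1, by omega⟩)

end DoublingCovering

/-- `f` is sectionally `p`-valent in `W ⊆ ℂⁿ`: on every complex affine line
`L = {a + t·b : t ∈ ℂ}` (with `b ≠ 0`) and every `c ∈ ℂ`, the equation `f = c` has at most
`p` solutions on `L ∩ W`. -/
def SectionallyPValentOn {n : ℕ} (f : EuclideanSpace ℂ (Fin n) → ℂ)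
    (W : Set (EuclideanSpace ℂ (Fin n))) (p : ℕ) : Prop :=
  ∀ a b : EuclideanSpace ℂ (Fin n), b ≠ 0 → ∀ c : ℂ, ∀ s : Finset ℂ,
    (∀ t ∈ s, a + t • b ∈ W ∧ f (a + t • b) = c) → s.card ≤ p

namespace DoublingCovering

variable {k N : ℕ} {G Y : Set (EuclideanSpace ℂ (Fin N))}

/-- A chain of pairwise distinct charts joining `u` to `v`, with all consecutive intersection
radii at least `ρ` (consecutive charts in particular intersect). -/
def ChainJoin (U : DoublingCovering k N G Y) (ρ : ℝ)
    (u v : EuclideanSpace ℂ (Fin N)) : Prop :=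
  ∃ (l : ℕ) (hl : 0 < l) (js : Fin l → Fin U.kappa), Function.Injective js ∧
    u ∈ U.chart (js ⟨0, hl⟩) ∧ v ∈ U.chart (js ⟨l - 1, by omega⟩) ∧
    ∀ m : ℕ, (h : m + 1 < l) → U.InterGe (js ⟨m, by omega⟩) (js ⟨m + 1, h⟩) ρ

end DoublingCovering

/-! The hyperbola `z y = ε²` is the image of the entire map `ζ ↦ (e^ζ, ε² e^{-ζ})`, which is
injective on every disc of radius `π`, and `G_ε` is the image of the rectangle
`2 log ε ≤ Re ζ ≤ 0`, `|Im ζ| ≤ π`. Cover the rectangle by the discs of radius `1/2` about the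
points of a square grid of mesh `2/5`; there are `O(log (1/ε))` of them. Rescaled to the unit
disc, discs about neighbouring grid points overlap in a disc of radius `1/10`, and the grid is
connected, so any two charts are joined by a chain. -/

theorem EuclideanSpace.norm_fin_one {𝕜 : Type*} [RCLike 𝕜] (x : EuclideanSpace 𝕜 (Fin 1)) :
    ‖x‖ = ‖x 0‖ := by
  simp [EuclideanSpace.norm_eq]

theorem Complex.injOn_exp_ball (c : ℂ) : InjOn Complex.exp (ball c Real.pi) := by
  intro z hz w hw hzw
  obtain ⟨n, hn⟩ := Complex.exp_eq_exp_iff_exists_int.1 hzw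
  have hdist : ‖(n : ℂ) * (2 * Real.pi * Complex.I)‖ < 2 * Real.pi := by
    rw [show (n : ℂ) * (2 * Real.pi * Complex.I) = (z - c) - (w - c) by rw [hn]; ring]
    have := norm_sub_le (z - c) (w - c)
    rw [mem_ball, dist_eq_norm] at hz hw
    linarith
  have hn0 : n = 0 := by
    by_contra hne
    have : (1 : ℝ) ≤ |(n : ℝ)| := by exact_mod_cast Int.one_le_abs hne
    simp [abs_of_pos Real.pi_pos] at hdist
    nlinarith [Real.pi_pos]
  simpa [hn0] using hn

section HalfDiscChart

local notation "ℂ¹" => EuclideanSpace ℂ (Fin 1)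

variable {X : Type*}

def halfDiscChart (F : ℂ → X) (c : ℂ) (x : ℂ¹) : X :=
  F (c + x 0 / 2)

theorem mem_ball_fin_one {x : ℂ¹} {z : ℂ} {r : ℝ} :
    x ∈ ball (EuclideanSpace.single 0 z) r ↔ ‖x 0 - z‖ < r := by
  rw [mem_ball, dist_eq_norm, EuclideanSpace.norm_fin_one]
  simp

theorem mem_image_halfDiscChart {F : ℂ → X} {c ζ : ℂ} (h : ‖ζ - c‖ < 1 / 2) :
    F ζ ∈ halfDiscChart F c '' ball 0 1 := by
  refine ⟨EuclideanSpace.single 0 (2 * (ζ - c)), ?_, by simp [halfDiscChart]⟩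
  rw [mem_ball_zero_iff, PiLp.norm_single, norm_mul, Complex.norm_ofNat]
  linarith

theorem halfDiscChart_injOn {F : ℂ → X} {c : ℂ} {r : ℝ} (hF : InjOn F (ball c r)) :
    InjOn (halfDiscChart F c) (ball 0 (2 * r)) := by
  have hmaps : MapsTo (fun x : ℂ¹ => c + x 0 / 2) (ball 0 (2 * r)) (ball c r) := by
    intro x hx
    rw [mem_ball_zero_iff, EuclideanSpace.norm_fin_one] at hx
    rw [mem_ball, dist_eq_norm, add_sub_cancel_left, norm_div]
    norm_num
    linarith
  intro x hx y hy hxy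
  have h0 : x 0 = y 0 := by simpa using hF (hmaps hx) (hmaps hy) hxy
  ext i
  rwa [Subsingleton.elim i 0]

theorem analyticOnNhd_halfDiscChart [NormedAddCommGroup X] [NormedSpace ℂ X] {F : ℂ → X}
    (hF : AnalyticOnNhd ℂ F univ) (c : ℂ) (s : Set ℂ¹) :
    AnalyticOnNhd ℂ (halfDiscChart F c) s := fun x _ =>
  (hF _ (mem_univ _)).comp <| analyticAt_const.add <|
    ((EuclideanSpace.proj (0 : Fin 1) : ℂ¹ →L[ℂ] ℂ).analyticAt x).div_const

/-- The centre `c' - c` is the chart coordinate of the midpoint of `c` and `c'`. -/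
theorem ball_subset_halfDiscChart_inter {F : ℂ → X} {c c' : ℂ} (h : ‖c - c'‖ ≤ 4 / 5) :
    ball (EuclideanSpace.single 0 (c' - c)) (1 / 10) ⊆
      {x ∈ ball 0 1 | halfDiscChart F c x ∈
        halfDiscChart F c '' ball 0 1 ∩ halfDiscChart F c' '' ball 0 1} := by
  intro x hx
  rw [mem_ball_fin_one] at hx
  have hcc' : ‖c' - c‖ ≤ 4 / 5 := by rwa [norm_sub_rev]
  have hx0 : ‖x 0‖ < 1 := by
    calc ‖x 0‖ ≤ ‖x 0 - (c' - c)‖ + ‖c' - c‖ := norm_le_norm_sub_add _ _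
      _ < 1 := by linarith
  have hnear : ‖(c + x 0 / 2) - c‖ < 1 / 2 := by
    rw [add_sub_cancel_left, norm_div]
    norm_num
    linarith
  have hnear' : ‖(c + x 0 / 2) - c'‖ < 1 / 2 := by
    calc ‖(c + x 0 / 2) - c'‖ = ‖(x 0 - (c' - c)) / 2 - (c' - c) / 2‖ := by ring_nf
      _ ≤ ‖x 0 - (c' - c)‖ / 2 + ‖c' - c‖ / 2 := by
        simpa [norm_div] using norm_sub_le ((x 0 - (c' - c)) / 2) ((c' - c) / 2)
      _ < 1 / 2 := by linarith
  exact ⟨by rwa [mem_ball_zero_iff, EuclideanSpace.norm_fin_one],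
    mem_image_halfDiscChart hnear, mem_image_halfDiscChart hnear'⟩

end HalfDiscChart

namespace DoublingCovering

variable {k N : ℕ} {G Y : Set (EuclideanSpace ℂ (Fin N))}

def ofHalfDiscs (F : ℂ → EuclideanSpace ℂ (Fin N)) (hF : AnalyticOnNhd ℂ F univ)
    (hFY : range F ⊆ Y) {κ : ℕ} (c : Fin κ → ℂ) {r : ℝ} (hr : 2 < r)
    (hinj : ∀ j, InjOn F (ball (c j) r)) (hG : G ⊆ ⋃ j, F '' ball (c j) (1 / 2)) :
    DoublingCovering 1 N G Y where
  kappa := κ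
  psi j := halfDiscChart F (c j)
  dom _ := ball 0 (2 * r)
  dom_open _ := isOpen_ball
  dom_superset _ := closedBall_subset_ball (by linarith)
  analytic j := analyticOnNhd_halfDiscChart hF (c j) _
  injOn j := halfDiscChart_injOn (hinj j)
  mapsTo _ x _ := hFY (mem_range_self _)
  covers := hG.trans <| iUnion_mono fun j => by
    rintro _ ⟨ζ, hζ, rfl⟩
    exact mem_image_halfDiscChart (by rwa [← dist_eq_norm])

section ofHalfDiscs

variable {F : ℂ → EuclideanSpace ℂ (Fin N)} {hF : AnalyticOnNhd ℂ F univ} {hFY : range F ⊆ Y}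
  {κ : ℕ} {c : Fin κ → ℂ} {r : ℝ} {hr : 2 < r} {hinj : ∀ j, InjOn F (ball (c j) r)}
  {hG : G ⊆ ⋃ j, F '' ball (c j) (1 / 2)}

theorem interGe_ofHalfDiscs {i j : Fin κ} (h : ‖c i - c j‖ ≤ 4 / 5) :
    (ofHalfDiscs F hF hFY c hr hinj hG).InterGe i j (1 / 10) :=
  ⟨⟨_, ball_subset_halfDiscChart_inter h⟩,
    ⟨_, ball_subset_halfDiscChart_inter (by rwa [norm_sub_rev])⟩⟩

end ofHalfDiscs

def interGraph (U : DoublingCovering k N G Y) (ρ : ℝ) : SimpleGraph (Fin U.kappa) where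
  Adj i j := i ≠ j ∧ U.InterGe i j ρ
  symm := ⟨fun _ _ h => ⟨h.1.symm, h.2.2, h.2.1⟩⟩
  loopless := ⟨fun _ h => h.1 rfl⟩

theorem interGraph_adj {U : DoublingCovering k N G Y} {ρ : ℝ} {i j : Fin U.kappa} :
    (U.interGraph ρ).Adj i j ↔ i ≠ j ∧ U.InterGe i j ρ :=
  Iff.rfl

theorem chainJoin_of_reachable (U : DoublingCovering k N G Y) {ρ : ℝ} {i j : Fin U.kappa}
    {u v : EuclideanSpace ℂ (Fin N)} (hij : (U.interGraph ρ).Reachable i j)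
    (hu : u ∈ U.chart i) (hv : v ∈ U.chart j) : U.ChainJoin ρ u v := by
  obtain ⟨p, hp⟩ := hij.exists_isPath
  refine ⟨p.length + 1, p.length.succ_pos, fun n => p.getVert n, ?_, ?_, ?_, ?_⟩
  · intro a b hab
    exact Fin.ext <| hp.getVert_injOn (by simpa using Nat.lt_succ_iff.1 a.2)
      (by simpa using Nat.lt_succ_iff.1 b.2) hab
  · simpa using hu
  · simpa using hv
  · exact fun m hm => (interGraph_adj.1 (p.adj_getVert_succ (i := m) (by omega))).2

theorem chainJoin_of_preconnected (U : DoublingCovering k N G Y) {ρ : ℝ}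
    (hU : (U.interGraph ρ).Preconnected) {u v : EuclideanSpace ℂ (Fin N)} (hu : u ∈ G)
    (hv : v ∈ G) : U.ChainJoin ρ u v := by
  obtain ⟨i, hi⟩ := mem_iUnion.1 (U.covers hu)
  obtain ⟨j, hj⟩ := mem_iUnion.1 (U.covers hv)
  exact U.chainJoin_of_reachable (hU i j) hi hj

end DoublingCovering

theorem exists_fin_abs_sub_mul_le {h t : ℝ} {n : ℕ} (hh : 0 < h) (ht : 0 ≤ t) (htn : t ≤ n * h) :
    ∃ k : Fin (n + 1), |t - k * h| ≤ h / 2 := by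
  have hs : 0 ≤ t / h + 1 / 2 := by positivity
  have hsn : t / h ≤ n := (div_le_iff₀ hh).2 htn
  refine ⟨⟨⌊t / h + 1 / 2⌋₊, by rw [Nat.floor_lt hs]; push_cast; linarith⟩, ?_⟩
  have hlo := Nat.floor_le hs
  have hhi := Nat.lt_floor_add_one (t / h + 1 / 2)
  have ht' : t = t / h * h := (div_mul_cancel₀ t hh.ne').symm
  rw [abs_le]
  constructor <;> nlinarith

namespace Hyperbola

local notation "ℂ²" => EuclideanSpace ℂ (Fin 2)

def param (ε : ℝ) (ζ : ℂ) : ℂ² :=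
  Complex.exp ζ • EuclideanSpace.single 0 1 +
    ((ε : ℂ) ^ 2 * Complex.exp (-ζ)) • EuclideanSpace.single 1 1

@[simp]
theorem param_apply_zero (ε : ℝ) (ζ : ℂ) : param ε ζ 0 = Complex.exp ζ := by
  simp [param]

@[simp]
theorem param_apply_one (ε : ℝ) (ζ : ℂ) : param ε ζ 1 = (ε : ℂ) ^ 2 * Complex.exp (-ζ) := by
  simp [param]

theorem analyticOnNhd_param (ε : ℝ) : AnalyticOnNhd ℂ (param ε) univ := fun ζ _ =>
  (by unfold param; fun_prop : Differentiable ℂ (param ε)).analyticAt ζ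

theorem injOn_param (ε : ℝ) (c : ℂ) : InjOn (param ε) (ball c Real.pi) := fun _ hz _ hw h =>
  Complex.injOn_exp_ball c hz hw (by simpa using congrArg (· 0) h)

def hyperbola (ε : ℝ) : Set ℂ² :=
  {v | v 0 * v 1 = (ε : ℂ) ^ 2}

def unitPolydisc : Set ℂ² :=
  {v | ‖v 0‖ ≤ 1 ∧ ‖v 1‖ ≤ 1}

theorem range_param_subset (ε : ℝ) : range (param ε) ⊆ hyperbola ε := by
  rintro _ ⟨ζ, rfl⟩
  change param ε ζ 0 * param ε ζ 1 = _
  rw [param_apply_zero, param_apply_one, Complex.exp_neg]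
  field_simp

theorem exists_param_eq {ε : ℝ} (hε : 0 < ε) {u : ℂ²} (hu : u ∈ hyperbola ε ∩ unitPolydisc) :
    ∃ ζ : ℂ, param ε ζ = u ∧ -(2 * Real.log ε⁻¹) ≤ ζ.re ∧ ζ.re ≤ 0 ∧
      -Real.pi ≤ ζ.im ∧ ζ.im ≤ Real.pi := by
  obtain ⟨hY, h0, h1⟩ := hu
  change u 0 * u 1 = (ε : ℂ) ^ 2 at hY
  have hu0 : u 0 ≠ 0 := by
    rintro h
    rw [h, zero_mul, eq_comm] at hY
    exact hε.ne' (Complex.ofReal_eq_zero.1 (pow_eq_zero_iff two_ne_zero |>.1 hY))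
  have hε2 : ε ^ 2 ≤ ‖u 0‖ := by
    calc ε ^ 2 = ‖u 0‖ * ‖u 1‖ := by
          rw [← norm_mul, hY, norm_pow, Complex.norm_real, Real.norm_of_nonneg hε.le]
      _ ≤ ‖u 0‖ := mul_le_of_le_one_right (norm_nonneg _) h1
  refine ⟨Complex.log (u 0), ?_, ?_, ?_, (Complex.neg_pi_lt_log_im _).le,
    Complex.log_im_le_pi _⟩
  · ext i
    fin_cases i
    · simp [Complex.exp_log hu0]
    · simp [Complex.exp_neg, Complex.exp_log hu0, ← hY]
      field_simp
  · have := Real.log_le_log (by positivity) hε2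
    rw [Real.log_pow] at this
    rw [Complex.log_re, Real.log_inv]
    push_cast at this
    linarith
  · exact Complex.log_re _ ▸ Real.log_nonpos (norm_nonneg _) h0

def gridPoint {M K : ℕ} (p : Fin M × Fin K) : ℂ :=
  ⟨-(2 / 5 * p.1), 2 / 5 * p.2 - Real.pi⟩

theorem exists_gridPoint_near {n : ℕ} {ζ : ℂ} (hre : -(2 / 5 * n) ≤ ζ.re) (hre' : ζ.re ≤ 0)
    (him : -Real.pi ≤ ζ.im) (him' : ζ.im ≤ Real.pi) :
    ∃ p : Fin (n + 1) × Fin 17, ‖ζ - gridPoint p‖ < 1 / 2 := by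
  -- 17 rows suffice because `2π ≤ 16 · 2/5`.
  obtain ⟨m, hm⟩ := exists_fin_abs_sub_mul_le (t := -ζ.re) (n := n) (by norm_num : (0 : ℝ) < 2 / 5)
    (by linarith) (by linarith)
  obtain ⟨k, hk⟩ := exists_fin_abs_sub_mul_le (t := ζ.im + Real.pi) (n := 16)
    (by norm_num : (0 : ℝ) < 2 / 5) (by linarith) (by linarith [Real.pi_lt_d2])
  refine ⟨(m, k), (Complex.norm_le_abs_re_add_abs_im _).trans_lt ?_⟩
  have hre_eq : (ζ - gridPoint (m, k)).re = -(-ζ.re - m * (2 / 5)) := by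
    simp [gridPoint]; ring
  have him_eq : (ζ - gridPoint (m, k)).im = ζ.im + Real.pi - k * (2 / 5) := by
    simp [gridPoint]; ring
  rw [hre_eq, him_eq, abs_neg]
  linarith

theorem norm_gridPoint_sub_le_of_adj {M K : ℕ} {p q : Fin M × Fin K}
    (h : (SimpleGraph.pathGraph M □ SimpleGraph.pathGraph K).Adj p q) :
    ‖gridPoint p - gridPoint q‖ ≤ 2 / 5 := by
  refine (Complex.norm_le_abs_re_add_abs_im _).trans ?_
  rcases SimpleGraph.boxProd_adj.1 h with ⟨hadj, heq⟩ | ⟨hadj, heq⟩ <;>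
    rcases SimpleGraph.pathGraph_adj.1 hadj with e | e <;>
    simp [gridPoint, heq, ← e, abs_le] <;> constructor <;> linarith

theorem subset_iUnion_param_image {ε : ℝ} (hε : 0 < ε) :
    hyperbola ε ∩ unitPolydisc ⊆ ⋃ j : Fin ((⌈5 * Real.log ε⁻¹⌉₊ + 1) * 17),
      param ε '' ball (gridPoint (finProdFinEquiv.symm j)) (1 / 2) := by
  intro u hu
  obtain ⟨ζ, rfl, hre, hre', him, him'⟩ := exists_param_eq hε hu
  obtain ⟨p, hp⟩ := exists_gridPoint_near (n := ⌈5 * Real.log ε⁻¹⌉₊) (ζ := ζ)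
    (by linarith [Nat.le_ceil (5 * Real.log ε⁻¹)]) hre' him him'
  refine mem_iUnion.2 ⟨finProdFinEquiv p, ζ, ?_, rfl⟩
  rwa [Equiv.symm_apply_apply, mem_ball, dist_eq_norm]

def cover (ε : ℝ) (hε : 0 < ε) :
    DoublingCovering 1 2 (hyperbola ε ∩ unitPolydisc) (hyperbola ε) :=
  .ofHalfDiscs (param ε) (analyticOnNhd_param ε) (range_param_subset ε)
    (fun j => gridPoint (finProdFinEquiv.symm j)) (by linarith [Real.pi_gt_three])
    (fun _ => injOn_param ε _) (subset_iUnion_param_image hε)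

theorem cover_kappa_le {ε : ℝ} (hε : 0 < ε) (hε1 : ε ≤ 1) :
    ((cover ε hε).kappa : ℝ) ≤ 85 * Real.log (Real.exp 1 / ε) := by
  have hlog : 0 ≤ Real.log ε⁻¹ := Real.log_nonneg (one_le_inv_iff₀.2 ⟨hε, hε1⟩)
  have hceil := Nat.ceil_lt_add_one (mul_nonneg (by norm_num : (0 : ℝ) ≤ 5) hlog)
  have hkappa : ((cover ε hε).kappa : ℝ) = (⌈5 * Real.log ε⁻¹⌉₊ + 1) * 17 := by
    simp [cover, DoublingCovering.ofHalfDiscs]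
  rw [hkappa, div_eq_mul_inv, Real.log_mul (Real.exp_ne_zero 1) (inv_ne_zero hε.ne'),
    Real.log_exp]
  linarith

theorem interGraph_cover_preconnected {ε : ℝ} (hε : 0 < ε) :
    ((cover ε hε).interGraph (1 / 10)).Preconnected :=
  let f : (SimpleGraph.pathGraph _ □ SimpleGraph.pathGraph 17) →g
      (cover ε hε).interGraph (1 / 10) :=
    { toFun := finProdFinEquiv
      map_rel' := fun h => DoublingCovering.interGraph_adj.2
        ⟨finProdFinEquiv.injective.ne h.ne, DoublingCovering.interGe_ofHalfDiscs <| by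
          simpa using (norm_gridPoint_sub_le_of_adj h).trans (by norm_num)⟩ }
  ((SimpleGraph.pathGraph_preconnected _).boxProd (SimpleGraph.pathGraph_preconnected _)).map f
    finProdFinEquiv.surjective

end Hyperbola

/-- Doubling coverings of the hyperbola `H_ε = {z·y = ε²}`: there are absolute constants
`c₁, c₂ > 0` such that for every `0 < ε < 1/2`, `G_ε = H_ε ∩ Q` admits a doubling covering
`𝒰` in `H_ε` (with one-dimensional charts) with `κ(𝒰) ≤ c₁ log(c₂/ε)`, in which any two
points of the same connected component of `G_ε` are joined by a chain of charts with all
consecutive intersection radii at least `1/10`. -/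
theorem doubling_covering_of_hyperbola :
    ∃ c₁ c₂ : ℝ, 0 < c₁ ∧ 0 < c₂ ∧
      ∀ ε : ℝ, 0 < ε → ε < 1 / 2 →
      ∀ Y G : Set (EuclideanSpace ℂ (Fin 2)),
        Y = {v | v 0 * v 1 = (ε : ℂ) ^ 2} →
        G = Y ∩ {v | ‖v 0‖ ≤ 1 ∧ ‖v 1‖ ≤ 1} →
      ∃ U : DoublingCovering 1 2 G Y,
        (U.kappa : ℝ) ≤ c₁ * Real.log (c₂ / ε) ∧
        ∀ u₁ ∈ G, ∀ u₂ ∈ connectedComponentIn G u₁, U.ChainJoin (1 / 10) u₁ u₂ := by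
  refine ⟨85, Real.exp 1, by norm_num, Real.exp_pos 1, fun ε hε hε2 Y G hY hG => ?_⟩
  subst hY hG
  refine ⟨Hyperbola.cover ε hε, Hyperbola.cover_kappa_le hε (by linarith), fun u₁ hu₁ u₂ hu₂ => ?_⟩
  exact (Hyperbola.cover ε hε).chainJoin_of_preconnected
    (Hyperbola.interGraph_cover_preconnected hε) hu₁ (connectedComponentIn_subset _ _ hu₂)
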